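/- arXiv:2403.10458 — 2 statements merged into one kernel-verified Lean document; each statement's English description precedes it below -/
import Mathlib

section
/- Let u : S¹ → ℝ be a positive W^{1,1} function on the circle (of length 2π) with ∫ u dx = 1. Then ∫_{S¹} arctan(|∂ₓu|/u)·|∂ₓu| dx ≥ arctan(‖∂ₓu‖_{L¹}) · ‖∂ₓu‖_{L¹}. -/
/-!
The function `φ t = t * arctan t` is convex, and `arctan (|u'| / u) * |u'| = φ (|u'| / u) * u`.
Jensen's inequality for the probability density `u`, applied to the ratio `|u'| / u`, gives
`∫ φ (|u'| / u) * u ≥ φ (∫ |u'|)`, which is the claim.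
-/

open Real Set MeasureTheory

namespace ConvexOn

theorem add_rightDeriv_mul_sub_le {S : Set ℝ} {f : ℝ → ℝ} (hf : ConvexOn ℝ S f) {x y : ℝ}
    (hx : x ∈ interior S) (hy : y ∈ S) :
    f x + derivWithin f (Ioi x) x * (y - x) ≤ f y := by
  rcases lt_trichotomy x y with hxy | rfl | hyx
  · have hslope := hf.rightDeriv_le_slope_of_mem_interior hx hy hxy
    rw [slope_def_field, le_div_iff₀ (sub_pos.mpr hxy)] at hslope
    linarith
  · simp
  · have hslope := (hf.slope_le_leftDeriv_of_mem_interior hy hx hyx).trans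
      (hf.leftDeriv_le_rightDeriv_of_mem_interior hx)
    rw [slope_def_field, div_le_iff₀ (sub_pos.mpr hyx)] at hslope
    linarith

theorem map_integral_le_integral_mul_comp_div {α : Type*} [MeasurableSpace α] {μ : Measure α}
    {φ : ℝ → ℝ} (hφ : ConvexOn ℝ univ φ) {u w : α → ℝ} (hu : ∀ᵐ a ∂μ, 0 < u a)
    (hu_int : Integrable u μ) (hw_int : Integrable w μ)
    (hφw_int : Integrable (fun a ↦ φ (w a / u a) * u a) μ) (hmass : ∫ a, u a ∂μ = 1) :
    φ (∫ a, w a ∂μ) ≤ ∫ a, φ (w a / u a) * u a ∂μ := by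
  set L := ∫ a, w a ∂μ
  set c := derivWithin φ (Ioi L) L
  have hsupport : ∀ᵐ a ∂μ, φ L * u a + c * (w a - L * u a) ≤ φ (w a / u a) * u a := by
    filter_upwards [hu] with a ha
    have htangent := hφ.add_rightDeriv_mul_sub_le (x := L) (y := w a / u a)
      (by simp) (mem_univ _)
    have hscaled := mul_le_mul_of_nonneg_right htangent ha.le
    rwa [add_mul, mul_assoc, sub_mul, div_mul_cancel₀ _ ha.ne'] at hscaled
  have hLu_int : Integrable (fun a ↦ L * u a) μ := hu_int.const_mul L
  have hdev_int : Integrable (fun a ↦ c * (w a - L * u a)) μ := (hw_int.sub hLu_int).const_mul c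
  calc φ L = ∫ a, φ L * u a + c * (w a - L * u a) ∂μ := by
        rw [integral_add (hu_int.const_mul _) hdev_int, integral_const_mul, integral_const_mul,
          integral_sub hw_int hLu_int, integral_const_mul, hmass]
        ring
    _ ≤ ∫ a, φ (w a / u a) * u a ∂μ :=
        integral_mono_ae ((hu_int.const_mul _).add hdev_int) hφw_int hsupport

end ConvexOn

theorem convexOn_mul_arctan : ConvexOn ℝ univ fun t : ℝ ↦ t * arctan t := by
  have hφ' (x : ℝ) : HasDerivAt (fun t ↦ t * arctan t) (arctan x + x / (1 + x ^ 2)) x := by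
    refine ((hasDerivAt_id x).mul (hasDerivAt_arctan x)).congr_deriv ?_
    simp [div_eq_mul_inv]
  have hφ'' (x : ℝ) :
      HasDerivAt (fun t ↦ arctan t + t / (1 + t ^ 2)) (2 / (1 + x ^ 2) ^ 2) x := by
    have hden : HasDerivAt (fun t : ℝ ↦ 1 + t ^ 2) (2 * x) x := by
      simpa using (hasDerivAt_pow 2 x).const_add 1
    refine ((hasDerivAt_arctan x).add ((hasDerivAt_id x).div hden (by positivity))).congr_deriv ?_
    simp only [id]
    field_simp
    ring
  refine convexOn_of_hasDerivWithinAt2_nonneg convex_univ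
    (fun x _ ↦ (hφ' x).continuousAt.continuousWithinAt) (fun x _ ↦ (hφ' x).hasDerivWithinAt)
    (fun x _ ↦ (hφ'' x).hasDerivWithinAt) fun x _ ↦ by positivity

theorem stmt1_general (u : ℝ → ℝ) (hu : ContDiff ℝ 1 u)
    (hpos : ∀ x, 0 < u x)
    (hmass : ∫ x in (0:ℝ)..(2 * Real.pi), u x = 1) :
    ∫ x in (0:ℝ)..(2 * Real.pi), Real.arctan (|deriv u x| / u x) * |deriv u x| ≥
      Real.arctan (∫ x in (0:ℝ)..(2 * Real.pi), |deriv u x|) *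
        (∫ x in (0:ℝ)..(2 * Real.pi), |deriv u x|) := by
  have hu_cont := hu.continuous
  have hu'_cont : Continuous fun x ↦ |deriv u x| := (hu.continuous_deriv le_rfl).abs
  have hperspective (x : ℝ) : arctan (|deriv u x| / u x) * |deriv u x| =
      (fun t ↦ t * arctan t) (|deriv u x| / u x) * u x := by
    field_simp [(hpos x).ne']
  simp_rw [hperspective, intervalIntegral.integral_of_le two_pi_pos.le] at hmass ⊢
  rw [ge_iff_le, mul_comm]
  exact convexOn_mul_arctan.map_integral_le_integral_mul_comp_div (ae_of_all _ hpos)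
    hu_cont.integrableOn_Ioc hu'_cont.integrableOn_Ioc
    (by simp_rw [← hperspective]
        exact ((continuous_arctan.comp (hu'_cont.div hu_cont fun x ↦ (hpos x).ne')).mul
          hu'_cont).integrableOn_Ioc) hmass

theorem stmt1 (u : ℝ → ℝ) (hu : ContDiff ℝ 1 u)
    (hper : Function.Periodic u (2 * Real.pi))
    (hpos : ∀ x, 0 < u x)
    (hmass : ∫ x in (0:ℝ)..(2 * Real.pi), u x = 1) :
    ∫ x in (0:ℝ)..(2 * Real.pi), Real.arctan (|deriv u x| / u x) * |deriv u x| ≥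
      Real.arctan (∫ x in (0:ℝ)..(2 * Real.pi), |deriv u x|) *
        (∫ x in (0:ℝ)..(2 * Real.pi), |deriv u x|) :=
  stmt1_general u hu hpos hmass
end

section
/- Let u : S¹ → ℝ be a positive W^{1,1} function on the circle of length 2π with ∫ u dx = 1. Then ∫_{S¹} arctan(|∂ₓu|/u)·(|∂ₓu|/u) dx ≥ (1/(4π)) · arctan( (∫|∂ₓu|)² / ∫|∂ₓu|·u ) · ( (∫|∂ₓu|)² / ∫|∂ₓu|·u ). -/
/-!
Write `g = |u'| / u`, `A = ∫ |u'|`, `B = ∫ |u'| u` and `C = ∫ g`. Cauchy–Schwarz for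
`|u'| = √(|u'| u) · √(|u'| / u)` gives `A² ≤ B C`, i.e. `R := A² / B ≤ C`. The function
`φ t = t arctan t` is convex with `φ' ≥ 0` on `[0, ∞)`, so its tangent line at `m = R / 2π`,
integrated over the circle, yields `∫ φ ∘ g ≥ 2π φ(m) + φ'(m) (C - R) ≥ R arctan (R / 2π)`.
Finally `arctan` is concave on `[0, ∞)` and vanishes at `0`,
so `arctan R ≤ 2π arctan (R / 2π)`.
-/

open Real Set intervalIntegral

theorem ConvexOn.add_mul_sub_le_of_hasDerivAt {S : Set ℝ} {f : ℝ → ℝ} {f' x y : ℝ}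
    (hf : ConvexOn ℝ S f) (hx : x ∈ S) (hy : y ∈ S) (hd : HasDerivAt f f' x) :
    f x + f' * (y - x) ≤ f y := by
  rcases lt_trichotomy x y with hxy | rfl | hxy
  · have := hf.le_slope_of_hasDerivAt hx hy hxy hd
    rw [slope_def_field, le_div_iff₀ (sub_pos.2 hxy)] at this
    linarith
  · simp
  · have := hf.slope_le_of_hasDerivAt hy hx hxy hd
    rw [slope_def_field, div_le_iff₀ (sub_pos.2 hxy)] at this
    linarith

theorem ConvexOn.le_intervalIntegral_comp {φ g : ℝ → ℝ} {φ' m a b : ℝ}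
    (hφ : ConvexOn ℝ univ φ) (hφc : Continuous φ) (hd : HasDerivAt φ φ' m)
    (hg : Continuous g) (hab : a ≤ b) :
    (b - a) * φ m + φ' * ((∫ x in a..b, g x) - (b - a) * m) ≤ ∫ x in a..b, φ (g x) := by
  have htangent : ∀ x, φ m + φ' * (g x - m) ≤ φ (g x) := fun x =>
    hφ.add_mul_sub_le_of_hasDerivAt (mem_univ _) (mem_univ _) hd
  calc (b - a) * φ m + φ' * ((∫ x in a..b, g x) - (b - a) * m)
      = ∫ x in a..b, (φ m + φ' * (g x - m)) := by
        rw [integral_add intervalIntegrable_const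
            (Continuous.intervalIntegrable (by fun_prop) _ _),
          integral_const_mul, integral_sub (hg.intervalIntegrable _ _) intervalIntegrable_const]
        simp only [integral_const, smul_eq_mul]
    _ ≤ ∫ x in a..b, φ (g x) :=
        integral_mono hab (Continuous.intervalIntegrable (by fun_prop) _ _)
          ((hφc.comp hg).intervalIntegrable _ _) htangent

theorem sq_integral_le_integral_mul_mul_integral_div {f w : ℝ → ℝ} {a b : ℝ}
    (hf : Continuous f) (hw : Continuous w) (hf0 : ∀ x, 0 ≤ f x) (hw0 : ∀ x, 0 < w x)
    (hab : a ≤ b) :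
    (∫ x in a..b, f x) ^ 2 ≤ (∫ x in a..b, f x * w x) * ∫ x in a..b, f x / w x := by
  have hw0' : ∀ x, w x ≠ 0 := fun x => (hw0 x).ne'
  have hquad : ∀ c : ℝ, 0 ≤ (∫ x in a..b, f x / w x) * (c * c)
      + (-2 * ∫ x in a..b, f x) * c + ∫ x in a..b, f x * w x := by
    intro c
    have hexpand : ∀ x, f x / w x * (w x - c) ^ 2
        = f x / w x * (c * c) + -2 * f x * c + f x * w x := by
      intro x
      field_simp [hw0' x]
      ring
    have hnonneg : 0 ≤ ∫ x in a..b, f x / w x * (w x - c) ^ 2 :=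
      integral_nonneg hab fun x _ => mul_nonneg (div_nonneg (hf0 x) (hw0 x).le) (sq_nonneg _)
    simp_rw [hexpand] at hnonneg
    rwa [integral_add (Continuous.intervalIntegrable (by fun_prop) _ _)
        (Continuous.intervalIntegrable (by fun_prop) _ _),
      integral_add (Continuous.intervalIntegrable (by fun_prop) _ _)
        (Continuous.intervalIntegrable (by fun_prop) _ _),
      integral_mul_const, integral_mul_const, integral_const_mul] at hnonneg
  have := discrim_le_zero hquad
  rw [discrim] at this
  linarith

namespace Real

theorem hasDerivAt_arctan_mul_self (t : ℝ) :
    HasDerivAt (fun t => arctan t * t) (arctan t + t / (1 + t ^ 2)) t :=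
  ((hasDerivAt_arctan t).fun_mul (hasDerivAt_id' t)).congr_deriv (by ring)

theorem convexOn_arctan_mul_self : ConvexOn ℝ univ (fun t => arctan t * t) := by
  refine convexOn_of_hasDerivWithinAt2_nonneg convex_univ (by fun_prop)
    (fun t _ => (hasDerivAt_arctan_mul_self t).hasDerivWithinAt)
    (f'' := fun t => 2 / (1 + t ^ 2) ^ 2) (fun t _ => ?_) (fun t _ => by positivity)
  have h1 : 1 + t ^ 2 ≠ 0 := by positivity
  refine (((hasDerivAt_arctan t).fun_add ((hasDerivAt_id' t).fun_div
    ((hasDerivAt_pow 2 t).const_add 1) h1)).congr_deriv ?_).hasDerivWithinAt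
  field_simp
  ring

theorem mul_mul_arctan_le_integral_arctan_mul_self {g : ℝ → ℝ} {m a b : ℝ}
    (hg : Continuous g) (hab : a ≤ b) (hm : 0 ≤ m) (hmg : (b - a) * m ≤ ∫ x in a..b, g x) :
    (b - a) * m * arctan m ≤ ∫ x in a..b, arctan (g x) * g x := by
  have hjensen := convexOn_arctan_mul_self.le_intervalIntegral_comp (by fun_prop)
    (hasDerivAt_arctan_mul_self m) hg hab
  have hslope : 0 ≤ arctan m + m / (1 + m ^ 2) := by
    have : 0 ≤ arctan m := arctan_nonneg.2 hm
    positivity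
  nlinarith [mul_nonneg hslope (sub_nonneg.2 hmg)]

theorem arctan_mul_le_mul_arctan {k y : ℝ} (hk : 1 ≤ k) (hy : 0 ≤ y) :
    arctan (k * y) ≤ k * arctan y := by
  have hmono : MonotoneOn (fun y => k * arctan y - arctan (k * y)) (Ici 0) := by
    refine monotoneOn_of_hasDerivWithinAt_nonneg (convex_Ici 0) (by fun_prop)
      (f' := fun y => k * (1 / (1 + y ^ 2)) - 1 / (1 + (k * y) ^ 2) * k)
      (fun y _ => ?_) (fun y hy => ?_)
    · exact (((hasDerivAt_arctan y).const_mul k).sub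
        ((hasDerivAt_arctan (k * y)).comp y ((hasDerivAt_id' y).const_mul k |>.congr_deriv
          (mul_one k)))).hasDerivWithinAt
    · rw [interior_Ici] at hy
      have hky : y ^ 2 ≤ (k * y) ^ 2 := pow_le_pow_left₀ hy.out.le (by nlinarith [hy.out]) 2
      have : 1 / (1 + (k * y) ^ 2) ≤ 1 / (1 + y ^ 2) := by gcongr
      nlinarith
  simpa using hmono self_mem_Ici hy hy

end Real

theorem stmt2_general (u : ℝ → ℝ) (hu : ContDiff ℝ 1 u)
    (hpos : ∀ x, 0 < u x)
    (hden : 0 < ∫ x in (0:ℝ)..(2 * Real.pi), |deriv u x| * u x) :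
    ∫ x in (0:ℝ)..(2 * Real.pi), Real.arctan (|deriv u x| / u x) * (|deriv u x| / u x) ≥
      (1 / (4 * Real.pi)) *
        Real.arctan ((∫ x in (0:ℝ)..(2 * Real.pi), |deriv u x|) ^ 2 /
            (∫ x in (0:ℝ)..(2 * Real.pi), |deriv u x| * u x)) *
        ((∫ x in (0:ℝ)..(2 * Real.pi), |deriv u x|) ^ 2 /
            (∫ x in (0:ℝ)..(2 * Real.pi), |deriv u x| * u x)) := by
  have h2π : 0 < 2 * π := by positivity
  have hdu : Continuous fun x => |deriv u x| := (hu.continuous_deriv le_rfl).abs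
  have hcs := sq_integral_le_integral_mul_mul_integral_div hdu hu.continuous
    (fun x => abs_nonneg _) hpos h2π.le
  set R := (∫ x in (0:ℝ)..2 * π, |deriv u x|) ^ 2 / ∫ x in (0:ℝ)..2 * π, |deriv u x| * u x
  have hR : 0 ≤ R := by positivity
  have hRC : (2 * π - 0) * (R / (2 * π)) ≤ ∫ x in (0:ℝ)..2 * π, |deriv u x| / u x := by
    rw [sub_zero, mul_div_cancel₀ _ h2π.ne', div_le_iff₀' hden]
    exact hcs
  have hjensen := mul_mul_arctan_le_integral_arctan_mul_self
    (g := fun x => |deriv u x| / u x) (hdu.div hu.continuous fun x => (hpos x).ne') h2π.le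
    (by positivity) hRC
  rw [sub_zero, mul_div_cancel₀ _ h2π.ne'] at hjensen
  have harctan : arctan R ≤ 2 * π * arctan (R / (2 * π)) := by
    simpa only [mul_div_cancel₀ _ h2π.ne'] using
      arctan_mul_le_mul_arctan (k := 2 * π) (by linarith [pi_gt_three])
        (by positivity : 0 ≤ R / (2 * π))
  have hy : 0 ≤ arctan (R / (2 * π)) := arctan_nonneg.2 (by positivity)
  calc 1 / (4 * π) * arctan R * R ≤ 1 / (4 * π) * (2 * π * arctan (R / (2 * π))) * R := by
        gcongr
    _ = R * arctan (R / (2 * π)) / 2 := by field_simp; ring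
    _ ≤ R * arctan (R / (2 * π)) := by nlinarith [mul_nonneg hR hy]
    _ ≤ _ := hjensen

theorem stmt2 (u : ℝ → ℝ) (hu : ContDiff ℝ 1 u)
    (hper : Function.Periodic u (2 * Real.pi))
    (hpos : ∀ x, 0 < u x)
    (hmass : ∫ x in (0:ℝ)..(2 * Real.pi), u x = 1)
    (hden : 0 < ∫ x in (0:ℝ)..(2 * Real.pi), |deriv u x| * u x) :
    ∫ x in (0:ℝ)..(2 * Real.pi), Real.arctan (|deriv u x| / u x) * (|deriv u x| / u x) ≥
      (1 / (4 * Real.pi)) *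
        Real.arctan ((∫ x in (0:ℝ)..(2 * Real.pi), |deriv u x|) ^ 2 /
            (∫ x in (0:ℝ)..(2 * Real.pi), |deriv u x| * u x)) *
        ((∫ x in (0:ℝ)..(2 * Real.pi), |deriv u x|) ^ 2 /
            (∫ x in (0:ℝ)..(2 * Real.pi), |deriv u x| * u x)) :=
  stmt2_general u hu hpos hden
end
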